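/- An ω-narrow (not necessarily abelian) topological group H is topologically isomorphic to a subgroup of a separable topological group if and only if H is ω-narrow and w(H) ≤ 𝔠. -/

import Mathlib

open Cardinal Topology TopologicalSpace Pointwise

/-- A topological group is ω-narrow if it is covered by countably many translates of
every neighborhood of the identity. -/
def OmegaNarrow (G : Type u) [Group G] [TopologicalSpace G] : Prop :=
  ∀ U ∈ 𝓝 (1 : G), ∃ C : Set G, C.Countable ∧ Set.univ ⊆ C * U

/-- The weight of a topological space: the minimal cardinality of a base. -/
noncomputable def tweight (X : Type u) [TopologicalSpace X] : Cardinal.{u} :=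
  sInf {c : Cardinal.{u} | ∃ B : Set (Set X), IsTopologicalBasis B ∧ #B = c}

/-- A topological isomorphism of `H` onto a subgroup of a separable topological group:
a separable topological group `K` together with an injective, inducing homomorphism
`H →* K`. -/
structure SepGroupEmbedding (H : Type u) [Group H] [TopologicalSpace H] : Type (u + 1) where
  K : Type u
  [groupK : Group K]
  [topK : TopologicalSpace K]
  [tgK : IsTopologicalGroup K]
  [sepK : SeparableSpace K]
  f : H →* K
  inj : Function.Injective f
  inducing : Topology.IsInducing f

/-!
The two conditions are necessary because separable groups and their subgroups are ω-narrow, and a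
separable regular space has a base of at most `𝔠` regular open sets `interior (closure A)`,
`A` running over the subsets of a countable dense set.

Conversely, by Guran's argument, ω-narrowness lets one close any neighbourhood `U` of `1` under
finite intersections, square roots, inverses and a countable supply of conjugation-absorbing
neighbourhoods into a *countable* group filter basis. It defines a coarser group topology with a
countable base at `1` in which `U` is still a neighbourhood, and which is again ω-narrow, hence
separable. Doing this for the at most `𝔠` basic neighbourhoods of `1` recovers the topology of
`H` as the infimum of separable group topologies, so the diagonal embeds `H` into their product,
which is separable by the Hewitt–Marczewski–Pondiczery theorem.
-/

open Filter Set

universe u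

theorem eventually_injOn_restrict_fin {α : Type*} (I : Finset (ℕ → α)) :
    ∀ᶠ N in atTop, InjOn (fun (x : ℕ → α) (k : Fin N) => x k) I := by
  have hpair : ∀ x ∈ I, ∀ y ∈ I,
      ∀ᶠ N in atTop, (fun k : Fin N => x k) = (fun k : Fin N => y k) → x = y := by
    intro x _ y _
    by_cases hxy : x = y
    · exact Eventually.of_forall fun _ _ => hxy
    obtain ⟨k, hk⟩ := Function.ne_iff.1 hxy
    filter_upwards [eventually_gt_atTop k] with N hN h
    exact absurd (congrFun h ⟨k, hN⟩) hk
  simp only [← eventually_all_finset] at hpair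
  filter_upwards [hpair] with N hN x hx y hy
  exact hN x hx y hy

/-- Functions depending only on a finite prefix of the argument are dense. -/
theorem separableSpace_cantor_arrow_nat : SeparableSpace ((ℕ → Bool) → ℕ) := by
  refine ⟨⟨⋃ N : ℕ, range fun (σ : (Fin N → Bool) → ℕ) (x : ℕ → Bool) => σ fun k => x k,
    countable_iUnion fun _ => countable_range _, ?_⟩⟩
  rw [dense_iff_inter_open]
  rintro U hU ⟨f, hf⟩
  obtain ⟨I, u, hu, hIU⟩ := isOpen_pi_iff.1 hU f hf
  obtain ⟨N, hN⟩ := (eventually_injOn_restrict_fin I).exists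
  have hinj : Function.Injective fun (x : (I : Set (ℕ → Bool))) (k : Fin N) => x.1 k :=
    fun x y h => Subtype.ext (hN x.2 y.2 h)
  let σ := Function.extend (fun (x : (I : Set (ℕ → Bool))) (k : Fin N) => x.1 k) (fun x => f x) 0
  refine ⟨fun x => σ fun k => x k, hIU fun x hx => ?_, mem_iUnion.2 ⟨N, σ, rfl⟩⟩
  have : σ (fun k : Fin N => x k) = f x := hinj.extend_apply (fun x => f x) 0 ⟨x, hx⟩
  simpa only [this] using (hu x hx).2

theorem separableSpace_pi_nat_of_mk_le_continuum {ι : Type u} (hι : #ι ≤ 𝔠) :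
    SeparableSpace (ι → ℕ) := by
  obtain ⟨e⟩ := lift_mk_le'.1 (by simpa using hι : lift.{0} #ι ≤ lift.{u} #(ℕ → Bool))
  have := separableSpace_cantor_arrow_nat
  exact e.injective.surjective_comp_right.denseRange.separableSpace
    (by fun_prop : Continuous fun φ : (ℕ → Bool) → ℕ => φ ∘ e)

theorem separableSpace_pi_of_mk_le_continuum {ι : Type u} {X : ι → Type*}
    [∀ i, TopologicalSpace (X i)] [∀ i, SeparableSpace (X i)] (hι : #ι ≤ 𝔠) :
    SeparableSpace (∀ i, X i) := by
  cases isEmpty_or_nonempty (∀ i, X i) with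
  | inl => infer_instance
  | inr hne =>
    have (i : ι) : Nonempty (X i) := hne.map (· i)
    choose d hd using fun i => exists_dense_seq (X i)
    have := separableSpace_pi_nat_of_mk_le_continuum hι
    exact (DenseRange.piMap hd).separableSpace (by fun_prop)

theorem exists_isTopologicalBasis_mk_eq_tweight (X : Type u) [TopologicalSpace X] :
    ∃ B : Set (Set X), IsTopologicalBasis B ∧ #B = tweight X :=
  csInf_mem (s := {c | ∃ B : Set (Set X), IsTopologicalBasis B ∧ #B = c})
    ⟨_, _, isTopologicalBasis_opens, rfl⟩

theorem TopologicalSpace.IsTopologicalBasis.tweight_le_mk {X : Type u} [TopologicalSpace X]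
    {B : Set (Set X)} (hB : IsTopologicalBasis B) : tweight X ≤ #B :=
  csInf_le' ⟨B, hB, rfl⟩

theorem Topology.IsInducing.tweight_le {X Y : Type u} [TopologicalSpace X] [TopologicalSpace Y]
    {f : X → Y} (hf : IsInducing f) : tweight X ≤ tweight Y := by
  obtain ⟨B, hB, hBw⟩ := exists_isTopologicalBasis_mk_eq_tweight Y
  calc tweight X ≤ #(Set.preimage f '' B) := (hB.isInducing hf).tweight_le_mk
    _ ≤ #B := mk_image_le
    _ = tweight Y := hBw

theorem tweight_le_continuum (X : Type u) [TopologicalSpace X] [RegularSpace X]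
    [SeparableSpace X] : tweight X ≤ 𝔠 := by
  obtain ⟨D, hDc, hD⟩ := exists_countable_dense X
  have hB : IsTopologicalBasis ((fun A => interior (closure A)) '' 𝒫 D) := by
    refine isTopologicalBasis_of_isOpen_of_nhds (by rintro _ ⟨A, -, rfl⟩; exact isOpen_interior) ?_
    intro a O haO hO
    obtain ⟨F, hF, hFc, hFO⟩ := exists_mem_nhds_isClosed_subset (hO.mem_nhds haO)
    have hsub : interior F ⊆ closure (interior F ∩ D) :=
      hD.open_subset_closure_inter isOpen_interior
    refine ⟨_, ⟨interior F ∩ D, inter_subset_right, rfl⟩,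
      interior_maximal hsub isOpen_interior (mem_interior_iff_mem_nhds.2 hF), ?_⟩
    calc interior (closure (interior F ∩ D)) ⊆ closure F :=
          interior_subset.trans (closure_mono (inter_subset_left.trans interior_subset))
      _ ⊆ O := by rwa [hFc.closure_eq]
  calc tweight X ≤ #((fun A => interior (closure A)) '' 𝒫 D) := hB.tweight_le_mk
    _ ≤ #(𝒫 D) := mk_image_le
    _ = 2 ^ #D := mk_powerset D
    _ ≤ 2 ^ ℵ₀ := power_le_power_left two_ne_zero hDc.le_aleph0
    _ = 𝔠 := two_power_aleph0

theorem isInducing_const_pi_iInf {X ι : Type*} (t : ι → TopologicalSpace X) :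
    @IsInducing X (ι → X) (⨅ i, t i) (@Pi.topologicalSpace ι (fun _ => X) t) fun x _ => x := by
  refine @IsInducing.mk X (ι → X) (⨅ i, t i) (@Pi.topologicalSpace ι (fun _ => X) t) _ ?_
  simp only [Pi.topologicalSpace, induced_iInf, induced_compose]
  exact iInf_congr fun i => (@induced_id X (t i)).symm

theorem IsTopologicalGroup.le_of_nhds_one_le {G : Type*} [Group G] {t t' : TopologicalSpace G}
    (ht : @IsTopologicalGroup G t _) (ht' : @IsTopologicalGroup G t' _)
    (h : @nhds G t 1 ≤ @nhds G t' 1) : t ≤ t' := by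
  rw [le_iff_nhds]
  intro x
  rw [← @nhds_translation_mul_inv G t _ ht x, ← @nhds_translation_mul_inv G t' _ ht' x]
  exact comap_mono h

theorem Set.exists_countable_superset_closed {α : Type*} {s : Set α} (hs : s.Countable)
    (f : α → Set α) (hf : ∀ a, (f a).Countable) (g : α → α → α) :
    ∃ t, s ⊆ t ∧ t.Countable ∧ (∀ a ∈ t, f a ⊆ t) ∧ ∀ a ∈ t, ∀ b ∈ t, g a b ∈ t := by
  let step (u : Set α) : Set α := u ∪ (⋃ a ∈ u, f a) ∪ image2 g u u
  let u (n : ℕ) : Set α := step^[n] s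
  have hsucc (n : ℕ) : u (n + 1) = step (u n) := Function.iterate_succ_apply' step n s
  have hmono : Monotone u := monotone_nat_of_le_succ fun n => by
    rw [hsucc]; exact subset_union_left.trans subset_union_left
  have hcount (n : ℕ) : (u n).Countable := by
    induction n with
    | zero => exact hs
    | succ n ih =>
      rw [hsucc]; exact (ih.union (ih.biUnion fun a _ => hf a)).union (ih.image2 ih g)
  refine ⟨⋃ n, u n, subset_iUnion u 0, countable_iUnion hcount, ?_, ?_⟩
  · intro a ha
    obtain ⟨n, hn⟩ := mem_iUnion.1 ha
    refine Subset.trans ?_ (subset_iUnion u (n + 1))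
    rw [hsucc]
    exact (subset_biUnion_of_mem hn).trans (subset_union_right.trans subset_union_left)
  · intro a ha b hb
    obtain ⟨m, hm⟩ := mem_iUnion.1 ha
    obtain ⟨n, hn⟩ := mem_iUnion.1 hb
    refine mem_iUnion.2 ⟨max m n + 1, ?_⟩
    rw [hsucc]
    exact subset_union_right
      (mem_image2_of_mem (hmono (le_max_left m n) hm) (hmono (le_max_right m n) hn))

namespace OmegaNarrow

variable {G : Type u} [Group G]

theorem mono {t t' : TopologicalSpace G} (h : t ≤ t') (hω : @OmegaNarrow G _ t) :
    @OmegaNarrow G _ t' :=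
  fun U hU => hω U (nhds_mono h hU)

theorem of_isInducing {K : Type*} [TopologicalSpace G] [Group K] [TopologicalSpace K]
    [IsTopologicalGroup K] {f : G →* K} (hf : IsInducing f) (hK : OmegaNarrow K) :
    OmegaNarrow G := by
  intro U hU
  obtain ⟨V, hV, hVU⟩ := (hf.nhds_eq_comap 1).symm ▸ hU
  rw [map_one] at hV
  obtain ⟨W, hW, -, hWinv, hWV⟩ := exists_closed_nhds_one_inv_eq_mul_subset hV
  obtain ⟨C, hCc, hCW⟩ := hK W hW
  -- a point of `G` mapped into `c • W`, if there is one
  have hrep (c : K) : ∃ g : G, ∀ g' : G, c⁻¹ * f g' ∈ W → c⁻¹ * f g ∈ W := by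
    by_cases h : ∃ g, c⁻¹ * f g ∈ W
    · obtain ⟨g, hg⟩ := h
      exact ⟨g, fun _ _ => hg⟩
    · exact ⟨1, fun g' hg' => absurd ⟨g', hg'⟩ h⟩
  choose r hr using hrep
  refine ⟨r '' C, hCc.image r, fun x _ => ?_⟩
  obtain ⟨c, hc, w, hw, hcw⟩ := hCW (mem_univ (f x))
  have hxc : c⁻¹ * f x ∈ W := by rwa [← hcw, inv_mul_cancel_left]
  refine ⟨r c, mem_image_of_mem r hc, (r c)⁻¹ * x, hVU ?_, mul_inv_cancel_left _ _⟩
  have hinv : (c⁻¹ * f (r c))⁻¹ ∈ W := by rw [← hWinv]; exact inv_mem_inv.2 (hr c x hxc)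
  simpa [mul_assoc] using hWV (mul_mem_mul hinv hxc)

variable [τ : TopologicalSpace G] [IsTopologicalGroup G]

theorem _root_.omegaNarrow_of_separableSpace [SeparableSpace G] : OmegaNarrow G := by
  intro U hU
  obtain ⟨D, hDc, hD⟩ := exists_countable_dense G
  refine ⟨D, hDc, fun x _ => ?_⟩
  have hx : (fun y => y⁻¹ * x) ⁻¹' U ∈ 𝓝 x :=
    (Continuous.continuousAt (by fun_prop)).preimage_mem_nhds (by simpa using hU)
  obtain ⟨d, hdD, hdU⟩ := hD.inter_nhds_nonempty hx
  exact ⟨d, hdD, d⁻¹ * x, hdU, mul_inv_cancel_left d x⟩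

theorem separableSpace [(𝓝 (1 : G)).IsCountablyGenerated] (hω : OmegaNarrow G) :
    SeparableSpace G := by
  obtain ⟨V, hV⟩ := (𝓝 (1 : G)).exists_antitone_basis
  choose C hCc hCV using fun n => hω _ (inv_mem_nhds_one G (hV.mem n))
  refine ⟨⋃ n, C n, countable_iUnion hCc, dense_iff_inter_open.2 fun O hO ⟨x, hx⟩ => ?_⟩
  have : (fun y => x * y) ⁻¹' O ∈ 𝓝 1 :=
    (Continuous.continuousAt (by fun_prop)).preimage_mem_nhds (by simpa using hO.mem_nhds hx)
  obtain ⟨n, -, hn⟩ := hV.toHasBasis.mem_iff.1 this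
  obtain ⟨c, hc, w, hw, hcw⟩ := hCV n (mem_univ x)
  refine ⟨c, ?_, mem_iUnion.2 ⟨n, hc⟩⟩
  simpa [← hcw] using hn (Set.mem_inv.1 hw)

theorem exists_countable_nhds_one_conj_subset (hω : OmegaNarrow G) {U : Set G}
    (hU : U ∈ 𝓝 1) : ∃ 𝒲 : Set (Set G), 𝒲.Countable ∧ (∀ W ∈ 𝒲, W ∈ 𝓝 1) ∧
      ∀ x : G, ∃ W ∈ 𝒲, W ⊆ (fun v => x * v * x⁻¹) ⁻¹' U := by
  have hconj : (fun p : G × G => p.1⁻¹ * p.2 * p.1) ⁻¹' U ∈ 𝓝 1 ×ˢ 𝓝 1 := by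
    rw [← nhds_prod_eq]
    exact (Continuous.continuousAt (by fun_prop)).preimage_mem_nhds (by simpa using hU)
  obtain ⟨W, hW, hWU⟩ := mem_prod_self_iff.1 hconj
  obtain ⟨C, hCc, hCW⟩ := hω W hW
  refine ⟨(fun c => (fun v => c⁻¹ * v * c) ⁻¹' W) '' C, hCc.image _, ?_, fun x => ?_⟩
  · rintro _ ⟨c, -, rfl⟩
    exact (Continuous.continuousAt (by fun_prop)).preimage_mem_nhds (by simpa using hW)
  -- if `x⁻¹ = c * w` then `x * v * x⁻¹ = w⁻¹ * (c⁻¹ * v * c) * w`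
  obtain ⟨c, hc, w, hw, hcw⟩ := hCW (mem_univ x⁻¹)
  refine ⟨_, mem_image_of_mem _ hc, fun v hv => ?_⟩
  rw [← inv_inv x, ← hcw]
  simpa [mul_assoc] using @hWU (w, c⁻¹ * v * c) ⟨hw, hv⟩

theorem exists_countable_groupFilterBasis (hω : OmegaNarrow G) {U : Set G} (hU : U ∈ 𝓝 1) :
    ∃ B : GroupFilterBasis G, B.sets.Countable ∧ (∀ V ∈ B, V ∈ 𝓝 1) ∧ U ∈ B := by
  let N := {V : Set G // V ∈ 𝓝 1}
  choose sq hsq_open hsq_one hsq using fun V : N => exists_open_nhds_one_mul_subset V.2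
  choose bal hbal_count hbal_nhds hbal using
    fun V : N => hω.exists_countable_nhds_one_conj_subset V.2
  let next (V : N) : Set N :=
    {⟨V.1⁻¹, inv_mem_nhds_one G V.2⟩, ⟨sq V, (hsq_open V).mem_nhds (hsq_one V)⟩} ∪
      Subtype.val ⁻¹' bal V
  obtain ⟨𝒱, hU𝒱, h𝒱c, h𝒱next, h𝒱inter⟩ := Set.exists_countable_superset_closed
    (countable_singleton (⟨U, hU⟩ : N)) next
    (fun V => ((countable_singleton _).insert _).union
      ((hbal_count V).preimage Subtype.val_injective))
    (fun V W => ⟨V.1 ∩ W.1, inter_mem V.2 W.2⟩)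
  refine ⟨{ sets := Subtype.val '' 𝒱
            nonempty := ⟨U, _, hU𝒱 rfl, rfl⟩
            inter_sets := ?_
            one' := ?_
            mul' := ?_
            inv' := ?_
            conj' := ?_ }, h𝒱c.image _, ?_, ⟨_, hU𝒱 rfl, rfl⟩⟩
  · rintro _ _ ⟨V, hV, rfl⟩ ⟨W, hW, rfl⟩
    exact ⟨_, mem_image_of_mem _ (h𝒱inter V hV W hW), subset_rfl⟩
  · rintro _ ⟨V, -, rfl⟩
    exact mem_of_mem_nhds V.2
  · rintro _ ⟨V, hV, rfl⟩
    exact ⟨sq V, ⟨_, h𝒱next V hV (Or.inl (Or.inr rfl)), rfl⟩, hsq V⟩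
  · rintro _ ⟨V, hV, rfl⟩
    exact ⟨V.1⁻¹, ⟨_, h𝒱next V hV (Or.inl (Or.inl rfl)), rfl⟩, subset_rfl⟩
  · rintro x _ ⟨V, hV, rfl⟩
    obtain ⟨W, hW, hWV⟩ := hbal V x
    exact ⟨W, ⟨⟨W, hbal_nhds V W hW⟩, h𝒱next V hV (Or.inr hW), rfl⟩, hWV⟩
  · rintro _ ⟨V, -, rfl⟩
    exact V.2

theorem exists_separable_groupTopology_le (hω : OmegaNarrow G) {U : Set G} (hU : U ∈ 𝓝 1) :
    ∃ t : TopologicalSpace G, τ ≤ t ∧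
      @IsTopologicalGroup G t _ ∧ @SeparableSpace G t ∧ U ∈ @nhds G t 1 := by
  obtain ⟨B, hBc, hBnhds, hUB⟩ := hω.exists_countable_groupFilterBasis hU
  have hle : τ ≤ B.topology :=
    IsTopologicalGroup.le_of_nhds_one_le inferInstance B.isTopologicalGroup
      (B.nhds_one_hasBasis.ge_iff.2 hBnhds)
  have : (@nhds G B.topology 1).IsCountablyGenerated :=
    HasCountableBasis.isCountablyGenerated ⟨B.nhds_one_hasBasis, hBc⟩
  exact ⟨B.topology, hle, B.isTopologicalGroup,
    @separableSpace G _ B.topology B.isTopologicalGroup this (hω.mono hle), B.mem_nhds_one hUB⟩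

theorem nonempty_sepGroupEmbedding (hω : OmegaNarrow G) (hw : tweight G ≤ 𝔠) :
    Nonempty (SepGroupEmbedding G) := by
  obtain ⟨B, hB, hBw⟩ := exists_isTopologicalBasis_mk_eq_tweight G
  let ι := {b : Set G // b ∈ B ∧ (1 : G) ∈ b}
  have hι : #ι ≤ 𝔠 := (mk_subtype_mono fun _ => And.left).trans (hBw ▸ hw)
  choose t hτt htg hsep hmem using
    fun b : ι => hω.exists_separable_groupTopology_le ((hB.isOpen b.2.1).mem_nhds b.2.2)
  have hτ : τ = ⨅ b, t b := by
    refine le_antisymm (le_iInf hτt) (IsTopologicalGroup.le_of_nhds_one_le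
      (topologicalGroup_iInf htg) ‹_› fun U hU => ?_)
    obtain ⟨b, hb, hbU⟩ := hB.nhds_hasBasis.mem_iff.1 hU
    exact nhds_iInf ▸ mem_iInf_of_mem ⟨b, hb⟩ (mem_of_superset (hmem _) hbU)
  obtain ⟨b, hb, h1b, -⟩ := hB.exists_subset_of_mem_open (mem_univ (1 : G)) isOpen_univ
  have : Nonempty ι := ⟨⟨b, hb, h1b⟩⟩
  exact ⟨{ K := ι → G
           topK := Pi.topologicalSpace (t₂ := t)
           tgK := @Pi.topologicalGroup ι (fun _ => G) t _ htg
           sepK := @separableSpace_pi_of_mk_le_continuum ι (fun _ => G) t hsep hι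
           f := Pi.constMonoidHom ι G
           inj := Function.const_injective
           inducing := hτ ▸ isInducing_const_pi_iInf t }⟩

end OmegaNarrow

theorem SepGroupEmbedding.omegaNarrow {H : Type u} [Group H] [TopologicalSpace H]
    (e : SepGroupEmbedding H) : OmegaNarrow H :=
  letI := e.groupK; letI := e.topK; haveI := e.tgK; haveI := e.sepK
  omegaNarrow_of_separableSpace.of_isInducing e.inducing

theorem SepGroupEmbedding.tweight_le_continuum {H : Type u} [Group H] [TopologicalSpace H]
    (e : SepGroupEmbedding H) : tweight H ≤ 𝔠 :=
  letI := e.groupK; letI := e.topK; haveI := e.tgK; haveI := e.sepK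
  e.inducing.tweight_le.trans (_root_.tweight_le_continuum e.K)

theorem subgroup_of_separable_iff_general (H : Type u) [Group H] [TopologicalSpace H]
    [IsTopologicalGroup H] :
    Nonempty (SepGroupEmbedding H) ↔
      OmegaNarrow H ∧ tweight H ≤ Cardinal.continuum :=
  ⟨fun ⟨e⟩ => ⟨e.omegaNarrow, e.tweight_le_continuum⟩,
    fun ⟨hω, hw⟩ => hω.nonempty_sepGroupEmbedding hw⟩

/-- An ω-narrow topological group `H` is topologically isomorphic to a subgroup of a
separable topological group if and only if `H` is ω-narrow and `w(H) ≤ 𝔠`. -/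
theorem subgroup_of_separable_iff (H : Type u) [Group H] [TopologicalSpace H]
    [IsTopologicalGroup H] (hH : OmegaNarrow H) :
    Nonempty (SepGroupEmbedding H) ↔
      OmegaNarrow H ∧ tweight H ≤ Cardinal.continuum :=
  subgroup_of_separable_iff_general H
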